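/- arXiv:0710.2768 — 5 statements merged into one kernel-verified Lean document; each statement's English description precedes it below -/
import Mathlib

section
/- Let λ be an infinite cardinal and let Y ⊆ λ* be a set of cardinality less than the cofinality of λ. Then there exists an ordinal ε < λ such that the ε-neighborhoods [η]_ε, for η ∈ Y, are pairwise disjoint. -/
open Cardinal Topology

/-- For a cardinal `λ`, `λ*` is the set of finite sequences of elements of `λ`
(ordinals less than `λ`), represented as lists over the canonical type of order
type `λ` (i.e. `l.ord.ToType`, whose elements correspond to the ordinals `< λ`). -/
abbrev LambdaStar (l : Cardinal) : Type _ := List l.ord.ToType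

/-- The `ε`-neighborhood `[η]_ε = {η} ∪ {ρ ∈ λ* : η ⊂ ρ and ρ(|η|) ≥ ε}` of `η ∈ λ*`,
where `η ⊂ ρ` means that `η` is a proper initial segment of `ρ`, and `|η|` is the
length of `η`. The parameter `ε` ranges over `l.ord.ToType`, i.e. over the ordinals `< λ`. -/
def epsNbhd (l : Cardinal) (η : LambdaStar l) (ε : l.ord.ToType) : Set (LambdaStar l) :=
  {η} ∪ {ρ : LambdaStar l |
    List.IsPrefix η ρ ∧ ∃ h : η.length < ρ.length, ε ≤ ρ.get ⟨η.length, h⟩}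

/-- The topology on `λ*` generated by the subbase consisting of the `ε`-neighborhoods
`[η]_ε` for `η ∈ λ*` and `ε < λ`. -/
def lambdaStarTopology (l : Cardinal) : TopologicalSpace (LambdaStar l) :=
  TopologicalSpace.generateFrom
    {s : Set (LambdaStar l) | ∃ (η : LambdaStar l) (ε : l.ord.ToType), s = epsNbhd l η ε}

/-!
Choose `ε` above every entry of every `η ∈ Y`: each `η` is finite, and fewer than `cf λ`
bounds below `λ` are bounded below `λ`. Any `ρ` in `[η]_ε ∩ [ν]_ε` has both `η` and `ν` as
initial segments, so one of them, say `η`, is a proper initial segment of the other. Then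
`ρ(|η|) = ν(|η|) < ε`, although `ρ ∈ [η]_ε` and `ρ ≠ η` force `ρ(|η|) ≥ ε`.
-/

theorem List.exists_forall_lt {α : Type*} [LinearOrder α] [Nonempty α] [NoMaxOrder α]
    (L : List α) : ∃ b, ∀ x ∈ L, x < b := by
  obtain ⟨a, ha⟩ := L.finite_toSet.bddAbove
  obtain ⟨b, hab⟩ := exists_gt a
  exact ⟨b, fun x hx => (ha hx).trans_lt hab⟩

theorem Order.exists_forall_lt_of_mk_lt_cof {α : Type*} [LinearOrder α] {s : Set α}
    (hs : #s < Order.cof α) : ∃ b, ∀ x ∈ s, x < b := by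
  by_contra! h
  exact (Order.cof_le h).not_gt hs

theorem exists_forall_mem_lt_of_mk_lt_cof {α : Type*} [LinearOrder α] [Nonempty α]
    [NoMaxOrder α] {Y : Set (List α)} (hY : #Y < Order.cof α) :
    ∃ ε, ∀ η ∈ Y, ∀ x ∈ η, x < ε := by
  choose b hb using fun η : Y => η.1.exists_forall_lt
  obtain ⟨ε, hε⟩ := Order.exists_forall_lt_of_mk_lt_cof (s := Set.range b)
    (mk_range_le.trans_lt hY)
  exact ⟨ε, fun η hη x hx => (hb ⟨η, hη⟩ x hx).trans (hε _ ⟨⟨η, hη⟩, rfl⟩)⟩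

section epsNbhd

variable {l : Cardinal} {η ν ρ : LambdaStar l} {ε : l.ord.ToType}

theorem isPrefix_of_mem_epsNbhd (h : ρ ∈ epsNbhd l η ε) : η <+: ρ := by
  rcases h with rfl | ⟨hpre, -⟩
  exacts [List.prefix_refl _, hpre]

theorem le_getElem_of_mem_epsNbhd (h : ρ ∈ epsNbhd l η ε) (hlen : η.length < ρ.length) :
    ε ≤ ρ[η.length] := by
  rcases h with rfl | ⟨-, _, hle⟩
  exacts [absurd hlen (lt_irrefl _), hle]

theorem notMem_epsNbhd_of_isPrefix (hpre : η <+: ν) (hne : η ≠ ν)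
    (hν : ∀ x ∈ ν, x < ε) (hρ : ν <+: ρ) : ρ ∉ epsNbhd l η ε := by
  intro hmem
  have hlt : η.length < ν.length :=
    hpre.length_le.lt_of_ne fun h => hne (hpre.eq_of_length h)
  have hle := le_getElem_of_mem_epsNbhd hmem (hlt.trans_le hρ.length_le)
  rw [← hρ.getElem hlt] at hle
  exact (hν _ (List.getElem_mem hlt)).not_ge hle

theorem disjoint_epsNbhd_of_forall_lt (hη : ∀ x ∈ η, x < ε) (hν : ∀ x ∈ ν, x < ε)
    (hne : η ≠ ν) : Disjoint (epsNbhd l η ε) (epsNbhd l ν ε) := by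
  refine Set.disjoint_left.2 fun ρ hρη hρν => ?_
  have hη' := isPrefix_of_mem_epsNbhd hρη
  have hν' := isPrefix_of_mem_epsNbhd hρν
  rcases List.prefix_or_prefix_of_prefix hη' hν' with hpre | hpre
  · exact notMem_epsNbhd_of_isPrefix hpre hne hν hν' hρη
  · exact notMem_epsNbhd_of_isPrefix hpre hne.symm hη hη' hρν

end epsNbhd

/-- Let `λ` be an infinite cardinal and let `Y ⊆ λ*` have cardinality less than the
cofinality of `λ`. Then there exists `ε < λ` such that the `ε`-neighborhoods `[η]_ε`,
for `η ∈ Y`, are pairwise disjoint. -/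
theorem stmt8 (l : Cardinal) (hl : ℵ₀ ≤ l) (Y : Set (LambdaStar l))
    (hY : #Y < l.ord.cof) :
    ∃ ε : l.ord.ToType, ∀ η ∈ Y, ∀ ν ∈ Y, η ≠ ν →
      Disjoint (epsNbhd l η ε) (epsNbhd l ν ε) := by
  have : Nonempty l.ord.ToType := nonempty_ord_toType (aleph0_pos.trans_le hl).ne'
  have : NoMaxOrder l.ord.ToType := Ordinal.isSuccPrelimit_type_lt_iff.1 <| by
    rw [Ordinal.type_toType]
    exact (isSuccLimit_ord hl).isSuccPrelimit
  obtain ⟨ε, hε⟩ := exists_forall_mem_lt_of_mk_lt_cof (hY.trans_eq (Ordinal.cof_toType _).symm)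
  exact ⟨ε, fun η hη ν hν hne => disjoint_epsNbhd_of_forall_lt (hε η hη) (hε ν hν) hne⟩
end

section
/- Let X be a topological space and let B assign to each x ∈ X a family B(x) of subsets of X forming a weak base, i.e.: (i) x ∈ B for all B ∈ B(x); (ii) for all B₁, B₂ ∈ B(x) there is B ∈ B(x) with B ⊆ B₁ ∩ B₂; (iii) a set U ⊆ X is open if and only if for each x ∈ U, U contains an element of B(x). If for each x ∈ X some element of B(x) is countable (X is weakly locally countable), then X is locally countable: every point of X has a countable open neighborhood. -/
open Topology

/-!
Choose a countable `f y ∈ B y` for every `y` and close `{x}` under `y ↦ f y`. The closure is a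
countable union of countable stages, and it contains `f y` for each of its points `y`, which is
exactly what the weak-base criterion asks of an open set.
-/

namespace Set

variable {X : Type*}

def bindClosure (f : X → Set X) (s : Set X) : Set X :=
  ⋃ n, (fun t => ⋃ y ∈ t, f y)^[n] s

variable {f : X → Set X} {s : Set X}

theorem subset_bindClosure : s ⊆ bindClosure f s :=
  subset_iUnion_of_subset 0 le_rfl

theorem subset_bindClosure_of_mem {y : X} (hy : y ∈ bindClosure f s) :
    f y ⊆ bindClosure f s := by
  obtain ⟨n, hn⟩ := mem_iUnion.1 hy
  refine subset_iUnion_of_subset (n + 1) ?_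
  rw [Function.iterate_succ_apply']
  exact subset_biUnion_of_mem hn

theorem Countable.bindClosure (hs : s.Countable) (hf : ∀ y, (f y).Countable) :
    (bindClosure f s).Countable := by
  refine countable_iUnion fun n => ?_
  induction n with
  | zero => exact hs
  | succ n ih =>
    rw [Function.iterate_succ_apply']
    exact ih.biUnion fun y _ => hf y

end Set

theorem stmt11_general {X : Type*} [TopologicalSpace X] (B : X → Set (Set X))
    (h_open : ∀ U : Set X, IsOpen U ↔ ∀ x ∈ U, ∃ b ∈ B x, b ⊆ U)
    (h_count : ∀ x : X, ∃ b ∈ B x, b.Countable) :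
    ∀ x : X, ∃ U : Set X, IsOpen U ∧ x ∈ U ∧ U.Countable := by
  intro x
  choose f hfB hfc using h_count
  refine ⟨Set.bindClosure f {x}, ?_, Set.subset_bindClosure rfl,
    (Set.countable_singleton x).bindClosure hfc⟩
  exact (h_open _).2 fun y hy => ⟨f y, hfB y, Set.subset_bindClosure_of_mem hy⟩

/-- Let `X` be a topological space and let `B` assign to each `x ∈ X` a family `B x` of
subsets of `X` forming a *weak base*: (i) `x ∈ b` for all `b ∈ B x`; (ii) for all
`b₁, b₂ ∈ B x` there is `b ∈ B x` with `b ⊆ b₁ ∩ b₂`; (iii) a set `U ⊆ X` is open if and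
only if for each `x ∈ U`, `U` contains an element of `B x`. If for each `x ∈ X` some
element of `B x` is countable (`X` is weakly locally countable), then `X` is locally
countable: every point of `X` has a countable open neighborhood. -/
theorem stmt11 {X : Type*} [TopologicalSpace X] (B : X → Set (Set X))
    (h_mem : ∀ x : X, ∀ b ∈ B x, x ∈ b)
    (h_inter : ∀ x : X, ∀ b₁ ∈ B x, ∀ b₂ ∈ B x, ∃ b ∈ B x, b ⊆ b₁ ∩ b₂)
    (h_open : ∀ U : Set X, IsOpen U ↔ ∀ x ∈ U, ∃ b ∈ B x, b ⊆ U)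
    (h_count : ∀ x : X, ∃ b ∈ B x, b.Countable) :
    ∀ x : X, ∃ U : Set X, IsOpen U ∧ x ∈ U ∧ U.Countable :=
  stmt11_general B h_open h_count
end

section
/- Let X be a topological space with a weak base ⋃_{x∈X} B(x), i.e.: (i) x ∈ B for all B ∈ B(x); (ii) for all B₁, B₂ ∈ B(x) there is B ∈ B(x) with B ⊆ B₁ ∩ B₂; (iii) a set U ⊆ X is open if and only if for each x ∈ U, U contains an element of B(x). Suppose X is weakly locally countable (each B(x) contains a countable set) and weakly regular (for all distinct x, y ∈ X there are disjoint B_x ∈ B(x) and B_y ∈ B(y), and every member of every B(x) is closed in X). Then X is Hausdorff. -/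
/-!
A point `z` outside a closed set `C` has a countable, closed weak-base member missing `C`:
intersect a member inside the open set `Cᶜ` with a countable one. Starting from disjoint such
members at `x` and at `y`, grow two families of countable closed sets back and forth. At each
step a point already covered on one side receives a countable closed weak-base member avoiding
the finitely many sets chosen so far on the other side, whose union is still closed. Dovetailing
over the countably many covered points serves every one of them eventually, so the two unions are
disjoint and contain a weak-base member at each of their points, hence are open.
-/

open Set

section

variable {X : Type*}

lemma subset_biUnion_le (s : ℕ → Set X) {k n : ℕ} (h : k ≤ n) : s k ⊆ ⋃ l ≤ n, s l :=
  subset_iUnion₂ (s := fun l (_ : l ≤ n) => s l) k h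

lemma isClosed_biUnion_le [TopologicalSpace X] {s : ℕ → Set X} {n : ℕ}
    (h : ∀ k ≤ n, IsClosed (s k)) : IsClosed (⋃ k ≤ n, s k) :=
  (finite_Iic n).isClosed_biUnion h

def IsCountableClosedNonempty [TopologicalSpace X] (s : Set X) : Prop :=
  s.Countable ∧ IsClosed s ∧ s.Nonempty

structure BackAndForth (X : Type*) where
  pick : X → Set X → Set X
  enum : Set X → ℕ → X
  left₀ : Set X
  right₀ : Set X

namespace BackAndForth

variable (F : BackAndForth X)

/-- Stage `n + 1` serves, on each side, the point `enum s j` of the set `s` added at stage `i`,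
where `(i, j) = n.unpair`: it adds the set picked at that point against everything the other side
holds so far. -/
def stage : ℕ → Set X × Set X
  | 0 => (F.left₀, F.right₀)
  | n + 1 =>
    let a := F.pick (F.enum (stage n.unpair.1).1 n.unpair.2) (⋃ k ≤ n, (stage k).2)
    (a, F.pick (F.enum (stage n.unpair.1).2 n.unpair.2) ((⋃ k ≤ n, (stage k).1) ∪ a))
decreasing_by all_goals grind [Nat.unpair_left_le]

def left (n : ℕ) : Set X := (F.stage n).1

def right (n : ℕ) : Set X := (F.stage n).2

lemma left_zero : F.left 0 = F.left₀ := by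
  rw [left, stage]

lemma right_zero : F.right 0 = F.right₀ := by
  rw [right, stage]

lemma left_succ (n : ℕ) :
    F.left (n + 1) = F.pick (F.enum (F.left n.unpair.1) n.unpair.2) (⋃ k ≤ n, F.right k) := by
  rw [left, stage]; rfl

lemma right_succ (n : ℕ) :
    F.right (n + 1) = F.pick (F.enum (F.right n.unpair.1) n.unpair.2)
      ((⋃ k ≤ n, F.left k) ∪ F.left (n + 1)) := by
  rw [right, left_succ, stage]; rfl

variable [TopologicalSpace X]

def SeparatedUpTo (n : ℕ) : Prop :=
  (∀ k ≤ n, IsCountableClosedNonempty (F.left k) ∧ IsCountableClosedNonempty (F.right k)) ∧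
    ∀ k ≤ n, ∀ l ≤ n, Disjoint (F.left k) (F.right l)

def IsPickFor (P : X → Set X → Prop) : Prop :=
  ∀ z C, IsClosed C → z ∉ C →
    P z (F.pick z C) ∧ IsCountableClosedNonempty (F.pick z C) ∧ Disjoint (F.pick z C) C

def IsEnumeration : Prop :=
  ∀ s : Set X, s.Countable → s.Nonempty → range (F.enum s) = s

variable {F} {P : X → Set X → Prop}

lemma pick_enum (hpick : F.IsPickFor P) (henum : F.IsEnumeration) {s C : Set X}
    (hs : IsCountableClosedNonempty s) (hC : IsClosed C) (hsC : Disjoint s C) (j : ℕ) :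
    P (F.enum s j) (F.pick (F.enum s j) C) ∧ IsCountableClosedNonempty (F.pick (F.enum s j) C) ∧
      Disjoint (F.pick (F.enum s j) C) C :=
  hpick _ C hC <| hsC.notMem_of_mem_left <| (henum s hs.1 hs.2.2).subset (mem_range_self j)

lemma separatedUpTo_succ (hpick : F.IsPickFor P) (henum : F.IsEnumeration) {n : ℕ}
    (hn : F.SeparatedUpTo n) :
    P (F.enum (F.left n.unpair.1) n.unpair.2) (F.left (n + 1)) ∧
      P (F.enum (F.right n.unpair.1) n.unpair.2) (F.right (n + 1)) ∧
      F.SeparatedUpTo (n + 1) := by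
  obtain ⟨hgood, hdisj⟩ := hn
  have hi : n.unpair.1 ≤ n := Nat.unpair_left_le n
  obtain ⟨hPa, hagood, hadisj⟩ := pick_enum hpick henum (hgood _ hi).1
    (isClosed_biUnion_le fun l hl => (hgood l hl).2.2.1)
    (disjoint_iUnion₂_right.2 fun l hl => hdisj _ hi l hl) n.unpair.2
  rw [← left_succ] at hPa hagood hadisj
  obtain ⟨hPd, hdgood, hddisj⟩ := pick_enum hpick henum (hgood _ hi).2
    ((isClosed_biUnion_le fun k hk => (hgood k hk).1.2.1).union hagood.2.1)
    (disjoint_union_right.2 ⟨disjoint_iUnion₂_right.2 fun k hk => (hdisj k hk _ hi).symm,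
      (hadisj.mono_right (subset_biUnion_le F.right hi)).symm⟩) n.unpair.2
  rw [← right_succ] at hPd hdgood hddisj
  refine ⟨hPa, hPd, fun k hk => ?_, fun k hk l hl => ?_⟩
  · rcases Nat.le_succ_iff.1 hk with hk | rfl
    exacts [hgood k hk, ⟨hagood, hdgood⟩]
  · rcases Nat.le_succ_iff.1 hk with hk | rfl <;> rcases Nat.le_succ_iff.1 hl with hl | rfl
    · exact hdisj k hk l hl
    · exact (hddisj.mono_right (subset_union_of_subset_left (subset_biUnion_le F.left hk) _)).symm
    · exact hadisj.mono_right (subset_biUnion_le F.right hl)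
    · exact (hddisj.mono_right subset_union_right).symm

lemma separatedUpTo (hpick : F.IsPickFor P) (henum : F.IsEnumeration)
    (hleft : IsCountableClosedNonempty F.left₀) (hright : IsCountableClosedNonempty F.right₀)
    (hdisj : Disjoint F.left₀ F.right₀) (n : ℕ) : F.SeparatedUpTo n := by
  induction n with
  | zero =>
    refine ⟨fun k hk => ?_, fun k hk l hl => ?_⟩
    · rw [Nat.le_zero.1 hk, left_zero, right_zero]
      exact ⟨hleft, hright⟩
    · rw [Nat.le_zero.1 hk, Nat.le_zero.1 hl, left_zero, right_zero]
      exact hdisj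
  | succ n ih => exact (separatedUpTo_succ hpick henum ih).2.2

lemma exists_left_of_mem_left (hpick : F.IsPickFor P) (henum : F.IsEnumeration)
    (hsep : ∀ n, F.SeparatedUpTo n) {z : X} {i : ℕ} (hz : z ∈ F.left i) :
    ∃ n, P z (F.left n) := by
  have hgood := ((hsep i).1 i le_rfl).1
  obtain ⟨j, rfl⟩ := (henum _ hgood.1 hgood.2.2).symm.subset hz
  have h := (separatedUpTo_succ hpick henum (hsep (Nat.pair i j))).1
  rw [Nat.unpair_pair] at h
  exact ⟨_, h⟩

lemma exists_right_of_mem_right (hpick : F.IsPickFor P) (henum : F.IsEnumeration)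
    (hsep : ∀ n, F.SeparatedUpTo n) {z : X} {i : ℕ} (hz : z ∈ F.right i) :
    ∃ n, P z (F.right n) := by
  have hgood := ((hsep i).1 i le_rfl).2
  obtain ⟨j, rfl⟩ := (henum _ hgood.1 hgood.2.2).symm.subset hz
  have h := (separatedUpTo_succ hpick henum (hsep (Nat.pair i j))).2.1
  rw [Nat.unpair_pair] at h
  exact ⟨_, h⟩

end BackAndForth

theorem exists_disjoint_supersets_of_countable_closed [TopologicalSpace X]
    {P : X → Set X → Prop}
    (hP : ∀ z C, IsClosed C → z ∉ C →
      ∃ b, P z b ∧ IsCountableClosedNonempty b ∧ Disjoint b C)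
    {A D : Set X} (hA : IsCountableClosedNonempty A) (hD : IsCountableClosedNonempty D)
    (hAD : Disjoint A D) :
    ∃ U V, A ⊆ U ∧ D ⊆ V ∧ Disjoint U V ∧
      (∀ z ∈ U, ∃ b, P z b ∧ b ⊆ U) ∧ ∀ z ∈ V, ∃ b, P z b ∧ b ⊆ V := by
  choose! pick hpick using hP
  have hcount : ∀ s : Set X, s.Countable → s.Nonempty → ∃ f : ℕ → X, range f = s :=
    fun s hs hne => (hs.exists_eq_range hne).imp fun _ h => h.symm
  have : Nonempty X := ⟨hA.2.2.some⟩
  choose! enum henum using hcount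
  set F : BackAndForth X := ⟨pick, enum, A, D⟩
  have hsep := F.separatedUpTo hpick henum hA hD hAD
  refine ⟨⋃ n, F.left n, ⋃ n, F.right n, (subset_iUnion F.left 0).trans_eq' F.left_zero,
    (subset_iUnion F.right 0).trans_eq' F.right_zero, ?_, fun z hz => ?_, fun z hz => ?_⟩
  · exact disjoint_iUnion_left.2 fun k => disjoint_iUnion_right.2 fun l =>
      (hsep (max k l)).2 k (le_max_left k l) l (le_max_right k l)
  · obtain ⟨i, hz⟩ := mem_iUnion.1 hz
    obtain ⟨n, hn⟩ := F.exists_left_of_mem_left hpick henum hsep hz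
    exact ⟨_, hn, subset_iUnion F.left n⟩
  · obtain ⟨i, hz⟩ := mem_iUnion.1 hz
    obtain ⟨n, hn⟩ := F.exists_right_of_mem_right hpick henum hsep hz
    exact ⟨_, hn, subset_iUnion F.right n⟩

lemma exists_countable_mem_subset (B : X → Set (Set X))
    (h_inter : ∀ x : X, ∀ b₁ ∈ B x, ∀ b₂ ∈ B x, ∃ b ∈ B x, b ⊆ b₁ ∩ b₂)
    (h_count : ∀ x : X, ∃ b ∈ B x, b.Countable) {z : X} {b : Set X} (hb : b ∈ B z) :
    ∃ b' ∈ B z, b' ⊆ b ∧ b'.Countable := by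
  obtain ⟨c, hc, hcc⟩ := h_count z
  obtain ⟨b', hb', hb'bc⟩ := h_inter z b hb c hc
  exact ⟨b', hb', hb'bc.trans inter_subset_left, hcc.mono (hb'bc.trans inter_subset_right)⟩

lemma exists_mem_countable_closed_disjoint [TopologicalSpace X] (B : X → Set (Set X))
    (h_mem : ∀ x : X, ∀ b ∈ B x, x ∈ b)
    (h_inter : ∀ x : X, ∀ b₁ ∈ B x, ∀ b₂ ∈ B x, ∃ b ∈ B x, b ⊆ b₁ ∩ b₂)
    (h_isOpen : ∀ U : Set X, IsOpen U → ∀ x ∈ U, ∃ b ∈ B x, b ⊆ U)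
    (h_count : ∀ x : X, ∃ b ∈ B x, b.Countable)
    (h_closed : ∀ x : X, ∀ b ∈ B x, IsClosed b) {z : X} {C : Set X} (hC : IsClosed C)
    (hz : z ∉ C) : ∃ b ∈ B z, IsCountableClosedNonempty b ∧ Disjoint b C := by
  obtain ⟨b₀, hb₀, hb₀C⟩ := h_isOpen Cᶜ hC.isOpen_compl z hz
  obtain ⟨b, hb, hbb₀, hbc⟩ := exists_countable_mem_subset B h_inter h_count hb₀
  exact ⟨b, hb, ⟨hbc, h_closed z b hb, z, h_mem z b hb⟩,
    disjoint_compl_left.mono_left (hbb₀.trans hb₀C)⟩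

end

/-- Let `X` be a topological space with a weak base `B`: (i) `x ∈ b` for all `b ∈ B x`;
(ii) for all `b₁, b₂ ∈ B x` there is `b ∈ B x` with `b ⊆ b₁ ∩ b₂`; (iii) a set `U ⊆ X`
is open if and only if for each `x ∈ U`, `U` contains an element of `B x`. Suppose `X` is
weakly locally countable (each `B x` contains a countable set) and weakly regular (for all
distinct `x, y` there are disjoint `bₓ ∈ B x` and `b_y ∈ B y`, and every member of every
`B x` is closed in `X`). Then `X` is Hausdorff. -/
theorem stmt12 {X : Type*} [TopologicalSpace X] (B : X → Set (Set X))
    (h_mem : ∀ x : X, ∀ b ∈ B x, x ∈ b)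
    (h_inter : ∀ x : X, ∀ b₁ ∈ B x, ∀ b₂ ∈ B x, ∃ b ∈ B x, b ⊆ b₁ ∩ b₂)
    (h_open : ∀ U : Set X, IsOpen U ↔ ∀ x ∈ U, ∃ b ∈ B x, b ⊆ U)
    (h_count : ∀ x : X, ∃ b ∈ B x, b.Countable)
    (h_sep : ∀ x y : X, x ≠ y → ∃ bx ∈ B x, ∃ by' ∈ B y, Disjoint bx by')
    (h_closed : ∀ x : X, ∀ b ∈ B x, IsClosed b) :
    T2Space X := by
  have hgood : ∀ {z b}, b ∈ B z → b.Countable → IsCountableClosedNonempty b :=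
    fun hb hbc => ⟨hbc, h_closed _ _ hb, _, h_mem _ _ hb⟩
  refine ⟨fun x y hxy => ?_⟩
  obtain ⟨bx, hbx, by', hby, hdisj⟩ := h_sep x y hxy
  obtain ⟨a, ha, hab, hac⟩ := exists_countable_mem_subset B h_inter h_count hbx
  obtain ⟨d, hd, hdb, hdc⟩ := exists_countable_mem_subset B h_inter h_count hby
  obtain ⟨U, V, haU, hdV, hUV, hU, hV⟩ := exists_disjoint_supersets_of_countable_closed
    (fun z C hC hz => exists_mem_countable_closed_disjoint B h_mem h_inter
      (fun U => (h_open U).1) h_count h_closed hC hz)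
    (hgood ha hac) (hgood hd hdc) (hdisj.mono hab hdb)
  exact ⟨U, V, (h_open U).2 hU, (h_open V).2 hV, haU (h_mem x a ha), hdV (h_mem y d hd), hUV⟩
end

section
/- Assume that λ is an infinite cardinal with λ^ℵ₀ = λ. Then there exists a Hausdorff topological space X such that: (1) the cardinality of X is λ; (2) X is locally countable (every point has a countable open neighborhood); (3) X is scattered; (4) the set of isolated points of X has cardinality λ; and (5) X is sequentially compact. -/
/-!
Start with `λ` isolated points and, for every countably infinite set `C` of points that meets
each earlier such set in a finite set, add a fresh point `limitPoint C` to which `C` converges;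
there are only `λ ^ ℵ₀ = λ` countable sets, so `λ` fresh labels suffice, and Zorn's lemma
gives a maximal almost disjoint family of such sets. A set is open when it contains almost all
of the sequence attached to each of its points.

Since "lies on the sequence of" is well founded, the hereditary closure of a point is a countable
open set, and a minimal point of any set is isolated in it. By maximality every injective
sequence has infinitely many terms on the sequence of some point, hence a subsequence converging
to it. Two points are separated by splitting the union of their hereditary closures greedily:
each point joins the side of the first point, in a fixed enumeration, on whose sequence it lies;
almost disjointness leaves only finitely many exceptions on each sequence.
-/

open Cardinal Topology

open Set Filter

namespace ConvSystem

variable {X : Type*} (conv : X → Set X)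

abbrev topology : TopologicalSpace X where
  IsOpen U := ∀ z ∈ U, (conv z \ U).Finite
  isOpen_univ z _ := by simp
  isOpen_inter U V hU hV z hz := by
    rw [sdiff_inter]
    exact (hU z hz.1).union (hV z hz.2)
  isOpen_sUnion 𝒮 h z := by
    rintro ⟨U, hU, hzU⟩
    exact (h U hU z hzU).subset (sdiff_subset_sdiff_right (subset_sUnion_of_mem hU))

theorem isOpen_iff {U : Set X} : IsOpen[topology conv] U ↔ ∀ z ∈ U, (conv z \ U).Finite :=
  Iff.rfl

theorem isOpen_singleton_iff (hconv : ∀ x, (conv x).Infinite ∨ conv x = ∅) {x : X} :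
    IsOpen[topology conv] {x} ↔ conv x = ∅ := by
  simp only [isOpen_iff, mem_singleton_iff, forall_eq]
  refine ⟨fun h => (hconv x).resolve_left fun hinf => (hinf.sdiff (finite_singleton x)) h,
    fun h => ?_⟩
  simp [h]

def descendants (x : X) : Set X :=
  {z | Relation.ReflTransGen (fun c z => c ∈ conv z) z x}

theorem mem_descendants_self (x : X) : x ∈ descendants conv x :=
  Relation.ReflTransGen.refl

theorem conv_subset_descendants {x z : X} (hz : z ∈ descendants conv x) :
    conv z ⊆ descendants conv x :=
  fun _ hc => Relation.ReflTransGen.head hc hz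

theorem isOpen_descendants (x : X) : IsOpen[topology conv] (descendants conv x) := fun z hz => by
  simp [sdiff_eq_empty.2 (conv_subset_descendants conv hz)]

theorem countable_descendants (hcount : ∀ x, (conv x).Countable)
    (hwf : WellFounded fun c x => c ∈ conv x) (x : X) : (descendants conv x).Countable := by
  induction x using hwf.induction with
  | _ x ih =>
    have : descendants conv x ⊆ insert x (⋃ c ∈ conv x, descendants conv c) := by
      intro z hz
      obtain rfl | ⟨c, hzc, hcx⟩ := (Relation.ReflTransGen.cases_tail_iff _ _ _).1 hz
      · exact mem_insert _ _
      · exact mem_insert_of_mem _ (mem_biUnion hcx hzc)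
    exact (((hcount x).biUnion fun c hc => ih c hc).insert x).mono this

theorem exists_isOpen_countable (hcount : ∀ x, (conv x).Countable)
    (hwf : WellFounded fun c x => c ∈ conv x) (x : X) :
    ∃ U : Set X, IsOpen[topology conv] U ∧ x ∈ U ∧ U.Countable :=
  ⟨_, isOpen_descendants conv x, mem_descendants_self conv x,
    countable_descendants conv hcount hwf x⟩

theorem exists_isolated (hwf : WellFounded fun c x => c ∈ conv x) {A : Set X}
    (hA : A.Nonempty) : ∃ a ∈ A, ∃ U : Set X, IsOpen[topology conv] U ∧ U ∩ A = {a} := by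
  obtain ⟨a, haA, hmin⟩ := hwf.transGen.has_min A hA
  refine ⟨a, haA, _, isOpen_descendants conv a, eq_singleton_iff_unique_mem.2
    ⟨⟨mem_descendants_self conv a, haA⟩, fun z ⟨hz, hzA⟩ => ?_⟩⟩
  exact (Relation.reflTransGen_iff_eq_or_transGen.1 hz).resolve_right (hmin z hzA) |>.symm

theorem tendsto_nhds_of_tendsto_cofinite {p : X} {v : ℕ → X} (hv : ∀ n, v n ∈ conv p)
    (hfin : Tendsto v atTop cofinite) : Tendsto v atTop (@nhds X (topology conv) p) := by
  let := topology conv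
  refine (nhds_basis_opens p).tendsto_right_iff.2 fun U ⟨hpU, hU⟩ => ?_
  filter_upwards [hfin.eventually (hU p hpU).eventually_cofinite_notMem] with n hn
  by_contra hnU
  exact hn ⟨hv n, hnU⟩

theorem seqCompactSpace
    (hdense : ∀ B : Set X, B.Countable → B.Infinite → ∃ p, (B ∩ conv p).Infinite) :
    @SeqCompactSpace X (topology conv) := by
  let := topology conv
  refine ⟨fun u _ => ?_⟩
  by_cases hrep : ∃ a, ∃ᶠ n in atTop, u n = a
  · obtain ⟨a, ha⟩ := hrep
    obtain ⟨φ, hφ, hφa⟩ := extraction_of_frequently_atTop ha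
    exact ⟨a, mem_univ a, φ, hφ, by simp only [Function.comp_def, hφa, tendsto_const_nhds]⟩
  have hfin : Tendsto u atTop cofinite := le_cofinite_iff_eventually_ne.2 fun a => by
    simpa [not_frequently] using (not_exists.1 hrep) a
  have hinf : (range u).Infinite := fun hfin' =>
    (hfin.eventually hfin'.eventually_cofinite_notMem).exists.elim fun n hn => hn (mem_range_self n)
  obtain ⟨p, hp⟩ := hdense _ (countable_range u) hinf
  have hfreq : ∃ᶠ n in atTop, u n ∈ conv p := by
    rw [Nat.frequently_atTop_iff_infinite]
    exact Infinite.of_image u (s := u ⁻¹' conv p) (by rwa [image_preimage_eq_range_inter])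
  obtain ⟨φ, hφ, hφp⟩ := extraction_of_frequently_atTop hfreq
  exact ⟨p, mem_univ p, φ, hφ,
    tendsto_nhds_of_tendsto_cofinite conv hφp (hfin.comp hφ.tendsto_atTop)⟩

section Separation

variable (T : Set X) (ι : X → ℕ) (x y : X)

open Classical in
noncomputable def side (p : X) : Bool :=
  if p = x then false
  else if p = y then true
  else if h : {q | q ∈ T ∧ ι q < ι p ∧ p ∈ conv q}.Nonempty then
    side (Function.argminOn ι _ h)
  else false
termination_by ι p
decreasing_by exact (Function.argminOn_mem ι _ h).2.1

theorem side_eq_of_mem_conv {p q : X} (hq : q ∈ T) (hqp : ι q < ι p) (hp : p ∈ conv q)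
    (hpx : p ≠ x) (hpy : p ≠ y) :
    ∃ q' ∈ T, ι q' ≤ ι q ∧ p ∈ conv q' ∧ side conv T ι x y p = side conv T ι x y q' := by
  have h : {q | q ∈ T ∧ ι q < ι p ∧ p ∈ conv q}.Nonempty := ⟨q, hq, hqp, hp⟩
  obtain ⟨hT', -, hp'⟩ := Function.argminOn_mem ι _ h
  refine ⟨_, hT', Function.argminOn_le ι {q | q ∈ T ∧ ι q < ι p ∧ p ∈ conv q} (a := q)
    ⟨hq, hqp, hp⟩, hp', ?_⟩
  rw [side, if_neg hpx, if_neg hpy, dif_pos h]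

theorem finite_setOf_side_ne (hAD : Pairwise fun p q => (conv p ∩ conv q).Finite)
    (hT : ∀ z ∈ T, conv z ⊆ T) (hι : ∀ k, {q ∈ T | ι q ≤ k}.Finite) {z : X} (hz : z ∈ T) :
    {c ∈ conv z | side conv T ι x y c ≠ side conv T ι x y z}.Finite := by
  have hsub : {c ∈ conv z | side conv T ι x y c ≠ side conv T ι x y z} ⊆
      {x, y} ∪ {c ∈ T | ι c ≤ ι z} ∪ ⋃ q ∈ {q ∈ T | ι q ≤ ι z} \ {z}, conv z ∩ conv q := by
    rintro c ⟨hc, hne⟩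
    by_cases hcxy : c = x ∨ c = y
    · exact Or.inl (Or.inl hcxy)
    rw [not_or] at hcxy
    rcases le_or_gt (ι c) (ι z) with hle | hlt
    · exact Or.inl (Or.inr ⟨hT z hz hc, hle⟩)
    obtain ⟨q, hq, hqz, hcq, hside⟩ := side_eq_of_mem_conv conv T ι x y hz hlt hc hcxy.1 hcxy.2
    refine Or.inr (mem_biUnion ⟨⟨hq, hqz⟩, fun hqz' => hne ?_⟩ ⟨hc, hcq⟩)
    rwa [← mem_singleton_iff.1 hqz']
  refine (((finite_singleton y).insert x).union (hι _)).union ?_ |>.subset hsub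
  exact ((hι _).sdiff).biUnion fun q hq => hAD (Ne.symm hq.2)

theorem isOpen_setOf_side_eq (hAD : Pairwise fun p q => (conv p ∩ conv q).Finite)
    (hT : ∀ z ∈ T, conv z ⊆ T) (hι : ∀ k, {q ∈ T | ι q ≤ k}.Finite) (b : Bool) :
    IsOpen[topology conv] {p ∈ T | side conv T ι x y p = b} := by
  rintro z ⟨hz, rfl⟩
  refine (finite_setOf_side_ne conv T ι x y hAD hT hι hz).subset fun c ⟨hc, hcU⟩ => ⟨hc, ?_⟩
  exact fun h => hcU ⟨hT z hz hc, h⟩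

end Separation

theorem t2Space (hcount : ∀ x, (conv x).Countable) (hwf : WellFounded fun c x => c ∈ conv x)
    (hAD : Pairwise fun p q => (conv p ∩ conv q).Finite) : @T2Space X (topology conv) := by
  let := topology conv
  refine ⟨fun x y hxy => ?_⟩
  set T := descendants conv x ∪ descendants conv y
  have hT : ∀ z ∈ T, conv z ⊆ T := by
    rintro z (hz | hz)
    exacts [(conv_subset_descendants conv hz).trans subset_union_left,
      (conv_subset_descendants conv hz).trans subset_union_right]
  obtain ⟨ι, hι⟩ := countable_iff_exists_injOn.1
    ((countable_descendants conv hcount hwf x).union (countable_descendants conv hcount hwf y))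
  have hfin (k : ℕ) : {q ∈ T | ι q ≤ k}.Finite :=
    ((finite_Iic k).subset (by rintro _ ⟨q, hq, rfl⟩; exact hq.2)).of_finite_image
      (hι.mono fun _ hq => hq.1)
  have hx : side conv T ι x y x = false := by rw [side, if_pos rfl]
  have hy : side conv T ι x y y = true := by rw [side, if_neg hxy.symm, if_pos rfl]
  refine ⟨_, _, isOpen_setOf_side_eq conv T ι x y hAD hT hfin false,
    isOpen_setOf_side_eq conv T ι x y hAD hT hfin true,
    ⟨Or.inl (mem_descendants_self conv x), hx⟩, ⟨Or.inr (mem_descendants_self conv y), hy⟩,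
    disjoint_left.2 fun p hp hp' => ?_⟩
  simpa [hp.2] using hp'.2

end ConvSystem

namespace ADConstruction

variable {D : Type*} (code : {C : Set (D ⊕ D) // C.Countable} → D)

def limitPoint (C : {C : Set (D ⊕ D) // C.Countable}) : D ⊕ D := Sum.inr (code C)

def points (R : Set {C : Set (D ⊕ D) // C.Countable}) : Set (D ⊕ D) :=
  range Sum.inl ∪ limitPoint code '' R

structure IsADFamily (R : Set {C : Set (D ⊕ D) // C.Countable}) : Prop where
  infinite : ∀ C ∈ R, C.1.Infinite
  subset_points : ∀ C ∈ R, C.1 ⊆ points code R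
  pairwise_finite_inter : R.Pairwise fun C C' => (C.1 ∩ C'.1).Finite
  /- Accessibility for the global relation, rather than well-foundedness on `R`, is what passes
  to unions of chains. -/
  acc : ∀ C ∈ R, Acc (fun C' C => limitPoint code C' ∈ C.1) C

variable {code} {R R' : Set {C : Set (D ⊕ D) // C.Countable}}
  {B C : {C : Set (D ⊕ D) // C.Countable}}

theorem points_mono (h : R ⊆ R') : points code R ⊆ points code R' :=
  union_subset_union_right _ (image_mono h)

theorem mem_of_limitPoint_mem_points (hcode : Function.Injective code)
    (h : limitPoint code C ∈ points code R) : C ∈ R := by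
  rcases h with ⟨d, hd⟩ | ⟨C', hC', hC'C⟩
  · exact (Sum.inl_ne_inr hd).elim
  · exact hcode (Sum.inr_injective hC'C) ▸ hC'

theorem isADFamily_sUnion {𝔉 : Set (Set {C : Set (D ⊕ D) // C.Countable})}
    (hchain : IsChain (· ⊆ ·) 𝔉) (h𝔉 : ∀ R ∈ 𝔉, IsADFamily code R) : IsADFamily code (⋃₀ 𝔉) where
  infinite := fun C ⟨R, hR, hC⟩ => (h𝔉 R hR).infinite C hC
  subset_points := fun C ⟨R, hR, hC⟩ =>
    ((h𝔉 R hR).subset_points C hC).trans (points_mono (subset_sUnion_of_mem hR))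
  pairwise_finite_inter := by
    rintro C ⟨R, hR, hC⟩ C' ⟨R', hR', hC'⟩ hne
    rcases hchain.total hR hR' with hRR' | hRR'
    exacts [(h𝔉 R' hR').pairwise_finite_inter (hRR' hC) hC' hne,
      (h𝔉 R hR).pairwise_finite_inter hC (hRR' hC') hne]
  acc := fun C ⟨R, hR, hC⟩ => (h𝔉 R hR).acc C hC

theorem IsADFamily.insert (hcode : Function.Injective code) (hR : IsADFamily code R)
    (hBinf : B.1.Infinite) (hB : B.1 ⊆ points code R)
    (hBR : ∀ C ∈ R, (B.1 ∩ C.1).Finite) : IsADFamily code (insert B R) where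
  infinite := forall_mem_insert.2 ⟨hBinf, hR.infinite⟩
  subset_points := forall_mem_insert.2 ⟨hB.trans (points_mono (subset_insert B R)),
    fun C hC => (hR.subset_points C hC).trans (points_mono (subset_insert B R))⟩
  pairwise_finite_inter := pairwise_insert.2 ⟨hR.pairwise_finite_inter, fun C hC _ =>
    ⟨hBR C hC, inter_comm B.1 C.1 ▸ hBR C hC⟩⟩
  acc := forall_mem_insert.2 ⟨Acc.intro B fun C hC =>
    hR.acc C (mem_of_limitPoint_mem_points hcode (hB hC)), hR.acc⟩

variable (code) in
theorem exists_maximal_isADFamily : ∃ R, Maximal (IsADFamily code) R :=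
  zorn_subset {R | IsADFamily code R} fun _ h𝔉 hchain =>
    ⟨_, isADFamily_sUnion hchain h𝔉, fun _ => subset_sUnion_of_mem⟩

theorem exists_infinite_inter_of_maximal (hcode : Function.Injective code)
    (hR : Maximal (IsADFamily code) R) {B : Set (D ⊕ D)} (hBc : B.Countable)
    (hBinf : B.Infinite) (hB : B ⊆ points code R) : ∃ C ∈ R, (B ∩ C.1).Infinite := by
  by_contra! hfin
  have hBR : ⟨B, hBc⟩ ∈ R := hR.2 (hR.1.insert hcode hBinf hB hfin) (subset_insert _ R)
    (mem_insert _ R)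
  exact hBinf (inter_self B ▸ hfin _ hBR)

variable (code R) in
def conv (x : points code R) : Set (points code R) :=
  {c | ∃ C ∈ R, limitPoint code C = x.1 ∧ c.1 ∈ C.1}

theorem conv_eq_preimage_or_empty (hcode : Function.Injective code) (x : points code R) :
    (∃ C ∈ R, limitPoint code C = x.1 ∧ conv code R x = Subtype.val ⁻¹' C.1) ∨
      conv code R x = ∅ := by
  by_cases hx : ∃ C ∈ R, limitPoint code C = x.1
  · obtain ⟨C, hC, hCx⟩ := hx
    refine Or.inl ⟨C, hC, hCx, Subset.antisymm ?_ fun c hc => ⟨C, hC, hCx, hc⟩⟩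
    rintro c ⟨C', -, hC'x, hc⟩
    rwa [hcode (Sum.inr_injective (hC'x.trans hCx.symm))] at hc
  · exact Or.inr (eq_empty_iff_forall_notMem.2 fun c ⟨C, hC, hCx, _⟩ => hx ⟨C, hC, hCx⟩)

theorem countable_conv (hcode : Function.Injective code) (x : points code R) :
    (conv code R x).Countable := by
  rcases conv_eq_preimage_or_empty hcode x with ⟨C, -, -, hx⟩ | hx <;> rw [hx]
  exacts [C.2.preimage Subtype.val_injective, countable_empty]

theorem infinite_or_empty_conv (hcode : Function.Injective code) (hR : IsADFamily code R)
    (x : points code R) : (conv code R x).Infinite ∨ conv code R x = ∅ := by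
  refine (conv_eq_preimage_or_empty hcode x).imp (fun ⟨C, hC, _, hx⟩ => ?_) id
  rw [hx]
  exact (hR.infinite C hC).preimage (Subtype.range_coe ▸ hR.subset_points C hC)

theorem pairwise_finite_inter_conv (hcode : Function.Injective code) (hR : IsADFamily code R) :
    Pairwise fun x y => (conv code R x ∩ conv code R y).Finite := by
  intro x y hxy
  rcases conv_eq_preimage_or_empty hcode x with ⟨C, hC, hCx, hx⟩ | hx
  swap; · simp [hx]
  rcases conv_eq_preimage_or_empty hcode y with ⟨C', hC', hC'y, hy⟩ | hy
  swap; · simp [hy]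
  rw [hx, hy, ← preimage_inter]
  refine (hR.pairwise_finite_inter hC hC' ?_).preimage Subtype.val_injective.injOn
  rintro rfl
  exact hxy (Subtype.ext (hCx.symm.trans hC'y))

theorem acc_conv (hcode : Function.Injective code)
    (hacc : Acc (fun C' C => limitPoint code C' ∈ C.1) C) (hC : C ∈ R) (x : points code R)
    (hx : limitPoint code C = x.1) : Acc (fun c x => c ∈ conv code R x) x := by
  induction hacc generalizing x with
  | intro C _ ih =>
    refine Acc.intro x fun c hc => ?_
    obtain ⟨C₀, -, hC₀x, hc⟩ := hc
    rcases conv_eq_preimage_or_empty hcode c with ⟨C', hC', hC'c, -⟩ | hempty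
    · have hC₀C : C₀ = C := hcode (Sum.inr_injective (hC₀x.trans hx.symm))
      exact ih C' (hC'c ▸ hC₀C ▸ hc) hC' c hC'c
    · exact Acc.intro c fun d hd => by simp [hempty] at hd

theorem wellFounded_conv (hcode : Function.Injective code) (hR : IsADFamily code R) :
    WellFounded fun c x => c ∈ conv code R x := by
  refine ⟨fun x => ?_⟩
  rcases conv_eq_preimage_or_empty hcode x with ⟨C, hC, hCx, -⟩ | hempty
  · exact acc_conv hcode (hR.acc C hC) hC x hCx
  · exact Acc.intro x fun d hd => by simp [hempty] at hd

theorem exists_infinite_inter_conv (hcode : Function.Injective code)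
    (hR : Maximal (IsADFamily code) R) (B : Set (points code R)) (hBc : B.Countable)
    (hBinf : B.Infinite) : ∃ p, (B ∩ conv code R p).Infinite := by
  obtain ⟨C, hC, hinf⟩ := exists_infinite_inter_of_maximal hcode hR (hBc.image _)
    (hBinf.image Subtype.val_injective.injOn) (image_subset_iff.2 fun x _ => x.2)
  let p : points code R := ⟨limitPoint code C, Or.inr (mem_image_of_mem _ hC)⟩
  have hsub : B ∩ Subtype.val ⁻¹' C.1 ⊆ B ∩ conv code R p :=
    fun c ⟨hcB, hcC⟩ => ⟨hcB, C, hC, rfl, hcC⟩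
  refine ⟨p, ?_⟩
  refine (Infinite.of_image Subtype.val ?_).mono hsub
  rwa [image_inter_preimage]

theorem conv_eq_empty_iff (hR : IsADFamily code R) {x : points code R} :
    conv code R x = ∅ ↔ x.1 ∈ range Sum.inl := by
  refine ⟨fun h => ?_, fun ⟨d, hd⟩ => eq_empty_iff_forall_notMem.2
    fun _ ⟨C, _, hCx, _⟩ => Sum.inr_ne_inl (hCx.trans hd.symm)⟩
  rcases x.2 with hx | ⟨C, hC, hCx⟩
  · exact hx
  obtain ⟨s, hs⟩ := (hR.infinite C hC).nonempty
  exact (eq_empty_iff_forall_notMem.1 h ⟨s, hR.subset_points C hC hs⟩ ⟨C, hC, hCx, hs⟩).elim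

theorem mk_setOf_mem_range_inl : #{x : points code R | x.1 ∈ range Sum.inl} = #D := by
  have hsub : range Sum.inl ⊆ range (Subtype.val : points code R → D ⊕ D) := by
    rw [Subtype.range_coe]
    exact subset_union_left
  exact (mk_preimage_of_injective_of_subset_range _ _ Subtype.val_injective hsub).trans
    (mk_range_eq _ Sum.inl_injective)

theorem mk_points (hD : ℵ₀ ≤ #D) : #(points code R) = #D := by
  refine le_antisymm ((mk_set_le _).trans ?_) ?_
  · rw [mk_sum, lift_id, add_eq_self hD]
  · exact (mk_range_eq _ Sum.inl_injective).symm.le.trans (mk_le_mk_of_subset subset_union_left)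

end ADConstruction

theorem mk_setOf_countable_le {α : Type*} (hα : ℵ₀ ≤ #α) (hpow : #α ^ ℵ₀ = #α) :
    #{C : Set α // C.Countable} ≤ #α :=
  calc #{C : Set α // C.Countable} = #{C : Set α // #C ≤ ℵ₀} := by
        simp only [le_aleph0_iff_set_countable]
    _ ≤ max #α ℵ₀ ^ ℵ₀ := mk_bounded_set_le α ℵ₀
    _ = #α := by rw [max_eq_left hα, hpow]

open ConvSystem ADConstruction in
/-- Assume `λ` is an infinite cardinal with `λ ^ ℵ₀ = λ`. Then there exists a Hausdorff
topological space `X` such that: (1) `|X| = λ`; (2) `X` is locally countable (every point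
has a countable open neighborhood); (3) `X` is scattered (every nonempty subset has a
point isolated in its subspace topology); (4) the set of isolated points of `X` has
cardinality `λ`; and (5) `X` is sequentially compact. -/
theorem stmt13 (l : Cardinal.{0}) (hinf : ℵ₀ ≤ l) (hl : l ^ ℵ₀ = l) :
    ∃ (X : Type) (_ : TopologicalSpace X),
      T2Space X ∧
      #X = l ∧
      (∀ x : X, ∃ U : Set X, IsOpen U ∧ x ∈ U ∧ U.Countable) ∧
      (∀ A : Set X, A.Nonempty → ∃ a ∈ A, ∃ U : Set X, IsOpen U ∧ U ∩ A = {a}) ∧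
      #{x : X | IsOpen ({x} : Set X)} = l ∧
      SeqCompactSpace X := by
  obtain ⟨D, rfl⟩ : ∃ D : Type, #D = l := ⟨_, mk_out l⟩
  have hsum : #(D ⊕ D) = #D := by rw [mk_sum, lift_id, add_eq_self hinf]
  have hlabels : #{C : Set (D ⊕ D) // C.Countable} ≤ #D :=
    hsum ▸ mk_setOf_countable_le (hsum ▸ hinf) (hsum ▸ hl)
  obtain ⟨code⟩ := (le_def _ _).1 hlabels
  obtain ⟨R, hR⟩ := exists_maximal_isADFamily code
  have hcount := countable_conv code.injective (R := R)
  have hwf := wellFounded_conv code.injective hR.1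
  have hisolated (x : points code R) : IsOpen[topology (conv code R)] {x} ↔ x.1 ∈ range Sum.inl :=
    (isOpen_singleton_iff _ (infinite_or_empty_conv code.injective hR.1)).trans
      (conv_eq_empty_iff hR.1)
  refine ⟨points code R, topology (conv code R),
    t2Space _ hcount hwf (pairwise_finite_inter_conv code.injective hR.1), mk_points hinf,
    exists_isOpen_countable _ hcount hwf, fun A hA => exists_isolated _ hwf hA, ?_,
    seqCompactSpace _ (exists_infinite_inter_conv code.injective hR)⟩
  simp_rw [hisolated]
  exact mk_setOf_mem_range_inl
end

section
/- Every compact Hausdorff topological space which is dense in itself contains a countable subset which is dense in itself. -/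
open Topology

noncomputable def stmt15Aux {X : Type*} (A B : Set X → Set X) : List Bool → Set X
  | [] => Set.univ
  | (i :: s) => bif i then B (stmt15Aux A B s) else A (stmt15Aux A B s)

/-- Every nonempty compact Hausdorff topological space which is dense in itself (has no
isolated points) contains a (nonempty) countable subset which is dense in itself, i.e. a
countable subset `D` no point of which is isolated in the subspace topology of `D`. -/
theorem stmt15 {X : Type*} [TopologicalSpace X] [CompactSpace X] [T2Space X] [Nonempty X]
    (hdense : ∀ x : X, ¬ IsOpen ({x} : Set X)) :
    ∃ D : Set X, D.Countable ∧ D.Nonempty ∧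
      ∀ d ∈ D, ¬ ∃ U : Set X, IsOpen U ∧ U ∩ D = {d} := by
  classical
  -- splitting lemma
  have hsplit : ∀ V : Set X, ∃ p : Set X × Set X, IsOpen V → V.Nonempty →
      (IsOpen p.1 ∧ IsOpen p.2 ∧ p.1.Nonempty ∧ p.2.Nonempty ∧
        closure p.1 ⊆ V ∧ closure p.2 ⊆ V ∧ Disjoint (closure p.1) (closure p.2)) := by
    intro V
    by_cases hV : IsOpen V ∧ V.Nonempty
    · obtain ⟨hVo, x, hxV⟩ := hV
      have : ∃ y ∈ V, y ≠ x := by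
        by_contra h
        push_neg at h
        have : V = {x} := Set.eq_singleton_iff_unique_mem.2 ⟨hxV, h⟩
        exact hdense x (this ▸ hVo)
      obtain ⟨y, hyV, hyx⟩ := this
      obtain ⟨A, B, hAo, hBo, hxA, hyB, hAB⟩ := t2_separation hyx.symm
      obtain ⟨A', hA'n, hA'c, hA's⟩ :=
        exists_mem_nhds_isClosed_subset ((hVo.inter hAo).mem_nhds ⟨hxV, hxA⟩)
      obtain ⟨B', hB'n, hB'c, hB's⟩ :=
        exists_mem_nhds_isClosed_subset ((hVo.inter hBo).mem_nhds ⟨hyV, hyB⟩)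
      refine ⟨(interior A', interior B'), fun _ _ => ?_⟩
      have hA'' : closure (interior A') ⊆ V ∩ A :=
        (closure_minimal interior_subset hA'c).trans hA's
      have hB'' : closure (interior B') ⊆ V ∩ B :=
        (closure_minimal interior_subset hB'c).trans hB's
      refine ⟨isOpen_interior, isOpen_interior, ⟨x, mem_interior_iff_mem_nhds.2 hA'n⟩,
        ⟨y, mem_interior_iff_mem_nhds.2 hB'n⟩,
        hA''.trans Set.inter_subset_left, hB''.trans Set.inter_subset_left, ?_⟩
      exact Set.disjoint_of_subset (hA''.trans Set.inter_subset_right)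
        (hB''.trans Set.inter_subset_right) hAB
    · exact ⟨(∅, ∅), fun h1 h2 => absurd ⟨h1, h2⟩ hV⟩
  choose p hp using hsplit
  set A : Set X → Set X := fun V => (p V).1 with hA
  set B : Set X → Set X := fun V => (p V).2 with hB
  set U : List Bool → Set X := stmt15Aux A B with hU
  -- basic invariant
  have hinv : ∀ s : List Bool, IsOpen (U s) ∧ (U s).Nonempty := by
    intro s
    induction s with
    | nil => exact ⟨isOpen_univ, Set.univ_nonempty⟩
    | cons i s ih =>
      obtain ⟨h1, h2, h3, h4, _, _, _⟩ := hp (U s) ih.1 ih.2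
      cases i with
      | false => exact ⟨h1, h3⟩
      | true => exact ⟨h2, h4⟩
  have hsub : ∀ (s : List Bool) (i : Bool), closure (U (i :: s)) ⊆ U s := by
    intro s i
    obtain ⟨_, _, _, _, h5, h6, _⟩ := hp (U s) (hinv s).1 (hinv s).2
    cases i with
    | false => exact h5
    | true => exact h6
  have hdisj : ∀ s : List Bool,
      Disjoint (closure (U (false :: s))) (closure (U (true :: s))) := by
    intro s
    obtain ⟨_, _, _, _, _, _, h7⟩ := hp (U s) (hinv s).1 (hinv s).2
    exact h7
  -- prefixes
  set P : (ℕ → Bool) → ℕ → List Bool :=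
    fun b n => Nat.rec [] (fun m ih => b m :: ih) n with hP
  have hPsucc : ∀ b n, P b (n + 1) = b n :: P b n := fun _ _ => rfl
  have hPeq : ∀ (b b' : ℕ → Bool) (n : ℕ), (∀ k, k < n → b k = b' k) →
      P b n = P b' n := by
    intro b b' n
    induction n with
    | zero => intro _; rfl
    | succ m ih =>
      intro h
      rw [hPsucc, hPsucc, ih (fun k hk => h k (hk.trans (Nat.lt_succ_self m))),
        h m (Nat.lt_succ_self m)]
  -- branch compacta
  set K : (ℕ → Bool) → Set X := fun b => ⋂ n, closure (U (P b n)) with hK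
  have hmono : ∀ b n, closure (U (P b (n + 1))) ⊆ closure (U (P b n)) := by
    intro b n
    rw [hPsucc]
    exact (hsub (P b n) (b n)).trans subset_closure
  have hIcap : ∀ (b : ℕ → Bool) (C : Set X), IsClosed C →
      (∀ n, (C ∩ closure (U (P b n))).Nonempty) → (C ∩ K b).Nonempty := by
    intro b C hC hn
    have := IsCompact.nonempty_iInter_of_sequence_nonempty_isCompact_isClosed
      (fun n => C ∩ closure (U (P b n)))
      (fun n => Set.inter_subset_inter_right C (hmono b n)) hn
      ((hC.inter isClosed_closure).isCompact)
      (fun n => hC.inter isClosed_closure)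
    rwa [← Set.inter_iInter] at this
  have hKclosed : ∀ b, IsClosed (K b) := fun b => isClosed_iInter fun n => isClosed_closure
  have hKsub : ∀ b n, K b ⊆ closure (U (P b n)) := fun b n => Set.iInter_subset _ n
  -- the family for Zorn's lemma
  set S : Set (Set X) := {C | IsClosed C ∧ ∀ b, (C ∩ K b).Nonempty} with hS
  have hunivS : Set.univ ∈ S := by
    refine ⟨isClosed_univ, fun b => hIcap b _ isClosed_univ fun n => ?_⟩
    obtain ⟨z, hz⟩ := (hinv (P b n)).2
    exact ⟨z, Set.mem_univ z, subset_closure hz⟩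
  obtain ⟨C, -, hCS, hCmin⟩ : ∃ m, m ⊆ Set.univ ∧ Minimal (· ∈ S) m := by
    apply zorn_superset_nonempty S ?_ Set.univ hunivS
    intro c hcS hchain hcne
    refine ⟨⋂₀ c, ⟨isClosed_sInter fun t ht => (hcS ht).1, fun b => ?_⟩,
      fun s hs => Set.sInter_subset_of_mem hs⟩
    have hne : Nonempty c := Set.Nonempty.to_subtype hcne
    have := IsCompact.nonempty_iInter_of_directed_nonempty_isCompact_isClosed
      (fun t : c => (t : Set X) ∩ K b) ?_ (fun t => (hcS t.2).2 b)
      (fun t => ((hcS t.2).1.inter (hKclosed b)).isCompact)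
      (fun t => (hcS t.2).1.inter (hKclosed b))
    · rw [Set.sInter_eq_iInter]
      rwa [← Set.iInter_inter] at this
    · intro s t
      rcases hchain.total s.2 t.2 with h | h
      · exact ⟨s, subset_rfl, Set.inter_subset_inter_left _ h⟩
      · exact ⟨t, Set.inter_subset_inter_left _ h, subset_rfl⟩
  obtain ⟨hCclosed, hCK⟩ := hCS
  -- choose points
  set e : List Bool → ℕ → Bool := fun l n => l.getD n false with he
  have hxmem : ∀ l : List Bool, ∃ z, z ∈ C ∩ K (e l) := fun l => hCK (e l)
  choose x hx using hxmem
  refine ⟨Set.range x, Set.countable_range x, Set.range_nonempty x, ?_⟩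
  rintro d ⟨l, rfl⟩ ⟨W, hWo, hWD⟩
  have hdW : x l ∈ W ∩ Set.range x := by rw [hWD]; rfl
  set C' : Set X := C \ W with hC'
  have hC'closed : IsClosed C' := hCclosed.inter hWo.isClosed_compl
  by_cases hC'S : ∀ b, (C' ∩ K b).Nonempty
  · have : C' = C :=
      Set.Subset.antisymm Set.diff_subset (hCmin ⟨hC'closed, hC'S⟩ Set.diff_subset)
    have : x l ∈ C' := this ▸ (hx l).1
    exact this.2 hdW.1
  · push_neg at hC'S
    obtain ⟨b, hb⟩ := hC'S
    have hex : ∃ n, C' ∩ closure (U (P b n)) = ∅ := by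
      by_contra h
      push_neg at h
      have := hIcap b C' hC'closed h
      rw [hb] at this
      exact Set.not_nonempty_empty this
    obtain ⟨n, hn⟩ := hex
    -- two branches through the prefix P b n
    set c₁ : ℕ → Bool := fun k => if k < n then b k else false with hc₁
    set c₂ : ℕ → Bool := fun k => if k = n then true else c₁ k with hc₂
    set l₁ : List Bool := (P c₁ (n + 1)).reverse with hl₁
    set l₂ : List Bool := (P c₂ (n + 1)).reverse with hl₂
    -- getD facts
    have hPlen : ∀ (b' : ℕ → Bool) (m : ℕ), (P b' m).length = m := by
      intro b' m
      induction m with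
      | zero => rfl
      | succ k ih => rw [hPsucc]; simp [ih]
    have hgetD : ∀ (b' : ℕ → Bool) (m k : ℕ), k < m →
        (P b' m).reverse.getD k false = b' k := by
      intro b' m
      induction m with
      | zero => intro k hk; omega
      | succ j ih =>
        intro k hk
        rw [hPsucc]
        simp only [List.reverse_cons]
        rcases Nat.lt_or_ge k j with h | h
        · rw [List.getD_append _ _ _ _ (by simpa [hPlen] using h)]
          exact ih k h
        · have hkj : k = j := by omega
          subst hkj
          rw [List.getD_eq_getElem?_getD, List.getElem?_append_right (by simp [hPlen])]
          simp [hPlen]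
    have hgetD_ge : ∀ (b' : ℕ → Bool) (m k : ℕ), m ≤ k →
        (P b' m).reverse.getD k false = false := by
      intro b' m k hk
      rw [List.getD_eq_getElem?_getD, List.getElem?_eq_none (by simp [hPlen, hk])]
      rfl
    have hel₁ : e l₁ = c₁ := by
      funext k
      rcases Nat.lt_or_ge k (n + 1) with h | h
      · exact hgetD c₁ (n + 1) k h
      · rw [he]; simp only [hl₁]
        rw [hgetD_ge c₁ (n + 1) k h, hc₁]
        simp only [if_neg (by omega : ¬ k < n)]
    have hel₂ : e l₂ = c₂ := by
      funext k
      rcases Nat.lt_or_ge k (n + 1) with h | h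
      · exact hgetD c₂ (n + 1) k h
      · rw [he]; simp only [hl₂]
        rw [hgetD_ge c₂ (n + 1) k h, hc₂, hc₁]
        simp only [if_neg (by omega : ¬ k = n), if_neg (by omega : ¬ k < n)]
    -- both prefixes at level n agree with b
    have hPc₁ : P c₁ n = P b n := hPeq c₁ b n (fun k hk => by simp [hc₁, hk])
    have hPc₂ : P c₂ n = P b n := hPeq c₂ b n (fun k hk => by
      simp [hc₂, hc₁, hk, Nat.ne_of_lt hk])
    -- the two chosen points are in W
    have hmemW : ∀ (l' : List Bool), e l' = c₁ ∨ e l' = c₂ → x l' ∈ W := by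
      intro l' hl'
      have h1 : x l' ∈ C := (hx l').1
      have h2 : x l' ∈ closure (U (P b n)) := by
        rcases hl' with h | h
        · have := hKsub (e l') n (hx l').2
          rwa [h, hPc₁] at this
        · have := hKsub (e l') n (hx l').2
          rwa [h, hPc₂] at this
      by_contra hW
      exact Set.eq_empty_iff_forall_notMem.1 hn (x l') ⟨⟨h1, hW⟩, h2⟩
    have h₁W : x l₁ ∈ W := hmemW l₁ (Or.inl hel₁)
    have h₂W : x l₂ ∈ W := hmemW l₂ (Or.inr hel₂)
    -- hence both equal x l
    have h₁eq : x l₁ = x l := by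
      have : x l₁ ∈ W ∩ Set.range x := ⟨h₁W, ⟨l₁, rfl⟩⟩
      rwa [hWD] at this
    have h₂eq : x l₂ = x l := by
      have : x l₂ ∈ W ∩ Set.range x := ⟨h₂W, ⟨l₂, rfl⟩⟩
      rwa [hWD] at this
    -- but they lie in disjoint closed sets
    have hd₁ : x l₁ ∈ closure (U (false :: P b n)) := by
      have := hKsub (e l₁) (n + 1) (hx l₁).2
      rwa [hel₁, hPsucc, hPc₁, show c₁ n = false by simp [hc₁]] at this
    have hd₂ : x l₂ ∈ closure (U (true :: P b n)) := by
      have := hKsub (e l₂) (n + 1) (hx l₂).2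
      rwa [hel₂, hPsucc, hPc₂, show c₂ n = true by simp [hc₂]] at this
    have := hdisj (P b n)
    rw [Set.disjoint_left] at this
    exact this hd₁ (h₁eq.trans h₂eq.symm ▸ hd₂)
end
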